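/- Let d ≥ 1, r > 0, x ∈ ℝ^d, and f ∈ L¹_loc(ℝ^d). Then ∫_{S^{d-1}} ∫₀^r |f(x + sσ)| ds dσ ≤ C_d · r · M(f)(x), where C_d is a positive constant depending only on d. -/

import Mathlib

open MeasureTheory Filter Metric Set
open scoped ENNReal Topology

noncomputable section

/-- The Hardy–Littlewood maximal function
`M(f)(x) = sup_{s>0} (1/|B(x,s)|) ∫_{B(x,s)} |f|`. -/
def maximalFn (d : ℕ) (f : EuclideanSpace ℝ (Fin d) → ℝ)
    (x : EuclideanSpace ℝ (Fin d)) : ℝ≥0∞ :=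
  ⨆ (s : ℝ) (_ : 0 < s),
    (volume (ball x s))⁻¹ * ∫⁻ y in ball x s, ENNReal.ofReal |f y|

open scoped Function

/-!
Cut `(0, r]` into the dyadic shells `(a, 2a]`, `a = r / 2 ^ (k + 1)`. On such a shell the polar
weight `s ^ (d - 1)` is at least `a ^ (d - 1)`, so the spherical integral over the shell is at most
`a ^ (1 - d) ∫_{B(x, 2a)} |f| ≤ a ^ (1 - d) |B(x, 2a)| M(f)(x) = 2 ^ d a |B(0, 1)| M(f)(x)`.
The shells' values of `a` sum to `r`, which gives `C_d = 2 ^ d |B(0, 1)|`.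
-/

theorem AEMeasurable.exists_measurable_ge_ae_eq {α : Type*} [MeasurableSpace α]
    {μ : Measure α} {f : α → ℝ≥0∞} (hf : AEMeasurable f μ) :
    ∃ g, Measurable g ∧ f ≤ g ∧ f =ᵐ[μ] g := by
  obtain ⟨N, hsub, hN, hN0⟩ := exists_measurable_superset_of_null (ae_iff.1 hf.ae_eq_mk)
  refine ⟨fun x => hf.mk f x + N.indicator (fun _ => ∞) x,
    hf.measurable_mk.add (measurable_const.indicator hN), fun x => ?_, ?_⟩
  · by_cases hx : x ∈ N
    · simp [hx]
    · have : f x = hf.mk f x := not_not.1 fun h => hx (hsub h)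
      simp [hx, this]
  · filter_upwards [hf.ae_eq_mk, measure_eq_zero_iff_ae_notMem.1 hN0] with x hx hxN
    simp [hx, hxN]

theorem setLIntegral_Ioc_le_inv_mul_setLIntegral_pow_mul (φ : ℝ → ℝ≥0∞) (n : ℕ)
    {a : ℝ} (ha : 0 < a) (b : ℝ) :
    ∫⁻ s in Ioc a b, φ s ≤
      (ENNReal.ofReal (a ^ n))⁻¹ * ∫⁻ s in Ioc 0 b, ENNReal.ofReal (s ^ n) * φ s := by
  have hc : ENNReal.ofReal (a ^ n) ≠ 0 := (ENNReal.ofReal_pos.2 (pow_pos ha n)).ne'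
  rw [← ENNReal.mul_le_iff_le_inv hc ENNReal.ofReal_ne_top,
    ← lintegral_const_mul' _ _ ENNReal.ofReal_ne_top]
  calc ∫⁻ s in Ioc a b, ENNReal.ofReal (a ^ n) * φ s
      ≤ ∫⁻ s in Ioc a b, ENNReal.ofReal (s ^ n) * φ s :=
        setLIntegral_mono' measurableSet_Ioc fun s hs => by gcongr; exact hs.1.le
    _ ≤ _ := lintegral_mono_set (Ioc_subset_Ioc_left ha.le)

theorem iUnion_Ioc_div_two_pow {r : ℝ} (hr : 0 < r) :
    ⋃ k : ℕ, Ioc (r / 2 ^ (k + 1)) (r / 2 ^ k) = Ioc 0 r := by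
  ext s
  simp only [mem_iUnion, mem_Ioc]
  constructor
  · rintro ⟨k, hk, hks⟩
    exact ⟨lt_trans (by positivity) hk,
      hks.trans (div_le_self hr.le (one_le_pow₀ one_le_two))⟩
  · rintro ⟨hs, hsr⟩
    obtain ⟨k, hk, hk'⟩ := exists_nat_pow_near ((one_le_div hs).2 hsr) one_lt_two
    refine ⟨k, ?_, ?_⟩
    · rwa [div_lt_iff₀ (by positivity), mul_comm, ← div_lt_iff₀ hs]
    · rwa [le_div_iff₀ (by positivity), mul_comm, ← le_div_iff₀ hs]

theorem pairwise_disjoint_Ioc_div_two_pow {r : ℝ} (hr : 0 ≤ r) :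
    Pairwise (Disjoint on fun k : ℕ => Ioc (r / 2 ^ (k + 1)) (r / 2 ^ k)) := by
  have hanti : Antitone fun k : ℕ => r / 2 ^ k := fun i j hij =>
    div_le_div_of_nonneg_left hr (by positivity) (pow_le_pow_right₀ one_le_two hij)
  simpa using hanti.pairwise_disjoint_on_Ioc_succ

section PolarCoordinates

variable {E : Type*} [NormedAddCommGroup E] [NormedSpace ℝ E] [FiniteDimensional ℝ E]
  [MeasurableSpace E] [BorelSpace E] [Nontrivial E] (μ : Measure E) [μ.IsAddHaarMeasure]

open Module

theorem lintegral_toSphere_lintegral_Ioi_eq_lintegral {g : E → ℝ≥0∞} (hg : Measurable g) :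
    ∫⁻ σ : sphere (0 : E) 1, (∫⁻ s in Ioi (0 : ℝ),
        ENNReal.ofReal (s ^ (finrank ℝ E - 1)) * g (s • (σ : E))) ∂μ.toSphere =
      ∫⁻ y, g y ∂μ := by
  set e := homeomorphUnitSphereProd E
  have hge : Measurable fun p : sphere (0 : E) 1 × Ioi (0 : ℝ) => g (e.symm p) :=
    hg.comp (continuous_subtype_val.comp e.symm.continuous).measurable
  calc _ = ∫⁻ p, g (e.symm p) ∂μ.toSphere.prod (.volumeIoiPow (finrank ℝ E - 1)) := by
        rw [lintegral_prod _ hge.aemeasurable]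
        refine lintegral_congr fun σ => ?_
        simp only [e, homeomorphUnitSphereProd_symm_apply_coe]
        rw [Measure.volumeIoiPow, lintegral_withDensity_eq_lintegral_mul _ (by fun_prop)
          (show Measurable fun y : Ioi (0 : ℝ) => g ((y : ℝ) • (σ : E)) by fun_prop),
          ← lintegral_subtype_comap measurableSet_Ioi]
        rfl
    _ = ∫⁻ y : ({0}ᶜ : Set E), g y ∂μ.comap (↑) := by
        rw [← (μ.measurePreserving_homeomorphUnitSphereProd).lintegral_comp_emb
          e.measurableEmbedding]
        simp only [e, Homeomorph.symm_apply_apply]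
    _ = ∫⁻ y, g y ∂μ := by
        rw [lintegral_subtype_comap (measurableSet_singleton 0).compl, restrict_compl_singleton]

theorem lintegral_toSphere_lintegral_Ioc_eq_setLIntegral_ball {g : E → ℝ≥0∞}
    (hg : Measurable g) (x : E) (t : ℝ) :
    ∫⁻ σ : sphere (0 : E) 1, (∫⁻ s in Ioc (0 : ℝ) t,
        ENNReal.ofReal (s ^ (finrank ℝ E - 1)) * g (x + s • (σ : E))) ∂μ.toSphere =
      ∫⁻ y in ball x t, g y ∂μ := by
  have htranslate : ∫⁻ y in ball x t, g y ∂μ =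
      ∫⁻ y, (ball 0 t).indicator (fun y => g (x + y)) y ∂μ := by
    rw [lintegral_indicator measurableSet_ball,
      ← (measurePreserving_add_left μ x).setLIntegral_comp_preimage_emb
        (MeasurableEquiv.addLeft x).measurableEmbedding, preimage_add_ball]
    simp
  rw [htranslate, ← lintegral_toSphere_lintegral_Ioi_eq_lintegral μ
    ((show Measurable fun y => g (x + y) by fun_prop).indicator measurableSet_ball)]
  refine lintegral_congr fun σ => ?_
  have hσ : ‖(σ : E)‖ = 1 := mem_sphere_zero_iff_norm.mp σ.2
  rw [Measure.restrict_congr_set Ioo_ae_eq_Ioc.symm, ← Iio_inter_Ioi,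
    ← setLIntegral_indicator measurableSet_Iio]
  refine setLIntegral_congr_fun measurableSet_Ioi fun s (hs : 0 < s) => ?_
  have hmem : s • (σ : E) ∈ ball (0 : E) t ↔ s < t := by
    rw [mem_ball_zero_iff, norm_smul, hσ, mul_one, Real.norm_of_nonneg hs.le]
  by_cases hst : s < t <;> simp [hmem, hst]

theorem lintegral_toSphere_lintegral_Ioc_two_mul_le {g : E → ℝ≥0∞} (hg : Measurable g)
    {x : E} {M : ℝ≥0∞} (hM : ∀ t > 0, ∫⁻ y in ball x t, g y ∂μ ≤ μ (ball x t) * M)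
    {a : ℝ} (ha : 0 < a) :
    ∫⁻ σ : sphere (0 : E) 1, (∫⁻ s in Ioc a (2 * a), g (x + s • (σ : E)))
        ∂μ.toSphere ≤
      ENNReal.ofReal (2 ^ finrank ℝ E * a) * μ (ball 0 1) * M := by
  set n := finrank ℝ E
  set c := ENNReal.ofReal (a ^ (n - 1))
  have hc : c ≠ 0 := (ENNReal.ofReal_pos.2 (pow_pos ha _)).ne'
  have hscale : ENNReal.ofReal ((2 * a) ^ n) = ENNReal.ofReal (2 ^ n * a) * c := by
    rw [← ENNReal.ofReal_mul (by positivity), mul_pow, mul_assoc, ← pow_succ',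
      Nat.sub_add_cancel finrank_pos]
  calc _ ≤ ∫⁻ σ : sphere (0 : E) 1, c⁻¹ * (∫⁻ s in Ioc (0 : ℝ) (2 * a),
          ENNReal.ofReal (s ^ (n - 1)) * g (x + s • (σ : E))) ∂μ.toSphere :=
        lintegral_mono fun σ => setLIntegral_Ioc_le_inv_mul_setLIntegral_pow_mul _ _ ha _
    _ = c⁻¹ * ∫⁻ y in ball x (2 * a), g y ∂μ := by
        rw [lintegral_const_mul' _ _ (ENNReal.inv_ne_top.2 hc),
          lintegral_toSphere_lintegral_Ioc_eq_setLIntegral_ball μ hg]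
    _ ≤ c⁻¹ * (μ (ball x (2 * a)) * M) := by gcongr; exact hM _ (by positivity)
    _ = ENNReal.ofReal (2 ^ n * a) * μ (ball 0 1) * M := by
        rw [μ.addHaar_ball_of_pos x (by positivity), hscale,
          show c⁻¹ * (ENNReal.ofReal (2 ^ n * a) * c * μ (ball 0 1) * M) =
            c⁻¹ * c * (ENNReal.ofReal (2 ^ n * a) * μ (ball 0 1) * M) by ring,
          ENNReal.inv_mul_cancel hc ENNReal.ofReal_ne_top, one_mul]

theorem lintegral_toSphere_lintegral_Ioc_le_of_setLIntegral_ball_le {g : E → ℝ≥0∞}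
    (hg : Measurable g) {x : E} {M : ℝ≥0∞}
    (hM : ∀ t > 0, ∫⁻ y in ball x t, g y ∂μ ≤ μ (ball x t) * M)
    {r : ℝ} (hr : 0 < r) :
    ∫⁻ σ : sphere (0 : E) 1, (∫⁻ s in Ioc (0 : ℝ) r, g (x + s • (σ : E)))
        ∂μ.toSphere ≤
      ENNReal.ofReal (2 ^ finrank ℝ E * μ.real (ball 0 1) * r) * M := by
  set n := finrank ℝ E
  set A : ℕ → Set ℝ := fun k => Ioc (r / 2 ^ (k + 1)) (r / 2 ^ k)
  have hA : ∀ k, A k = Ioc (r / 2 ^ (k + 1)) (2 * (r / 2 ^ (k + 1))) := fun k => by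
    simp only [A]; ring_nf
  have hmeas :
      ∀ k, Measurable fun σ : sphere (0 : E) 1 => ∫⁻ s in A k, g (x + s • (σ : E)) :=
    fun k => (show Measurable fun p : sphere (0 : E) 1 × ℝ => g (x + p.2 • (p.1 : E)) by
      fun_prop).lintegral_prod_right'
  have hgeom :
      ∑' k : ℕ, ENNReal.ofReal (2 ^ n * (r / 2 ^ (k + 1))) = ENNReal.ofReal (2 ^ n * r) := by
    have hk : ∀ k : ℕ, r / 2 ^ (k + 1) = r / 2 / 2 ^ k := fun k => by ring
    simp_rw [hk]
    rw [← ENNReal.ofReal_tsum_of_nonneg (fun k => by positivity)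
      ((summable_geometric_two' r).mul_left _), tsum_mul_left, tsum_geometric_two']
  calc _ = ∫⁻ σ : sphere (0 : E) 1, ∑' k, (∫⁻ s in A k, g (x + s • (σ : E)))
          ∂μ.toSphere := by
        simp_rw [← iUnion_Ioc_div_two_pow hr]
        exact lintegral_congr fun σ => lintegral_iUnion (fun k => measurableSet_Ioc)
          (pairwise_disjoint_Ioc_div_two_pow hr.le) _
    _ = ∑' k, ∫⁻ σ : sphere (0 : E) 1, (∫⁻ s in A k, g (x + s • (σ : E)))
          ∂μ.toSphere :=
        lintegral_tsum fun k => (hmeas k).aemeasurable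
    _ ≤ ∑' k : ℕ, ENNReal.ofReal (2 ^ n * (r / 2 ^ (k + 1))) * μ (ball 0 1) * M :=
        ENNReal.tsum_le_tsum fun k => hA k ▸
          lintegral_toSphere_lintegral_Ioc_two_mul_le μ hg hM (by positivity)
    _ = ENNReal.ofReal (2 ^ n * μ.real (ball 0 1) * r) * M := by
        rw [ENNReal.tsum_mul_right, ENNReal.tsum_mul_right, hgeom,
          mul_right_comm (2 ^ n : ℝ) _ r,
          ENNReal.ofReal_mul (by positivity : (0 : ℝ) ≤ 2 ^ n * r), ofReal_measureReal]

end PolarCoordinates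

theorem lintegral_ball_le_measure_mul_maximalFn {d : ℕ} (f : EuclideanSpace ℝ (Fin d) → ℝ)
    (x : EuclideanSpace ℝ (Fin d)) {t : ℝ} (ht : 0 < t) :
    ∫⁻ y in ball x t, ENNReal.ofReal |f y| ≤ volume (ball x t) * maximalFn d f x := by
  rw [← ENNReal.inv_mul_le_iff (measure_ball_pos volume x ht).ne' measure_ball_lt_top.ne]
  exact le_iSup₂ (f := fun s (_ : 0 < s) =>
    (volume (ball x s))⁻¹ * ∫⁻ y in ball x s, ENNReal.ofReal |f y|) t ht

/-- `∫_{S^{d-1}} ∫₀^r |f(x + sσ)| ds dσ ≤ C_d r M(f)(x)`. -/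
theorem statement6 (d : ℕ) (hd : 1 ≤ d) :
    ∃ C : ℝ, 0 < C ∧
      ∀ (r : ℝ), 0 < r → ∀ (x : EuclideanSpace ℝ (Fin d))
        (f : EuclideanSpace ℝ (Fin d) → ℝ), LocallyIntegrable f volume →
        (∫⁻ σ : Metric.sphere (0 : EuclideanSpace ℝ (Fin d)) 1,
            (∫⁻ s in Ioc (0 : ℝ) r,
              ENNReal.ofReal |f (x + s • (σ : EuclideanSpace ℝ (Fin d)))|)
            ∂(volume : Measure (EuclideanSpace ℝ (Fin d))).toSphere)
          ≤ ENNReal.ofReal (C * r) * maximalFn d f x := by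
  have : Nonempty (Fin d) := Fin.pos_iff_nonempty.mp hd
  have hball : 0 < volume.real (ball (0 : EuclideanSpace ℝ (Fin d)) 1) :=
    ENNReal.toReal_pos (measure_ball_pos volume 0 one_pos).ne' measure_ball_lt_top.ne
  refine ⟨2 ^ d * volume.real (ball (0 : EuclideanSpace ℝ (Fin d)) 1), by positivity,
    fun r hr x f hf => ?_⟩
  -- `f` need not be measurable: bound `|f|` by a measurable majorant with the same ball integrals.
  obtain ⟨g, hg, hfg, hfg_ae⟩ :=
    ((by fun_prop : Measurable fun t : ℝ => ENNReal.ofReal |t|).comp_aemeasurable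
      hf.aestronglyMeasurable.aemeasurable).exists_measurable_ge_ae_eq
  have hM : ∀ t > 0, ∫⁻ y in ball x t, g y ≤ volume (ball x t) * maximalFn d f x :=
    fun t ht => (lintegral_congr_ae (ae_restrict_of_ae hfg_ae)).symm.trans_le
      (lintegral_ball_le_measure_mul_maximalFn f x ht)
  calc _ ≤ ∫⁻ σ : sphere (0 : EuclideanSpace ℝ (Fin d)) 1,
          (∫⁻ s in Ioc (0 : ℝ) r, g (x + s • (σ : EuclideanSpace ℝ (Fin d))))
          ∂volume.toSphere :=
        lintegral_mono fun σ => lintegral_mono fun s => hfg _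
    _ ≤ _ := by
        simpa [finrank_euclideanSpace_fin] using
          lintegral_toSphere_lintegral_Ioc_le_of_setLIntegral_ball_le volume hg hM hr
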